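/- arXiv:2510.07093 — 2 statements merged into one kernel-verified Lean document; each statement's English description precedes it below -/
import Mathlib

section
/- If F_{Y|X=x} is continuous for every x ∈ X, then the conditional (1−α)-quantile of the CQR score given X and the trained parameters satisfies |q_{1−α}(S | X, ϑ_n)| ≤ Δ(X, ϑ_n), where Δ(X, ϑ_n) = max{|θ̲_nᵀX − θ̲*ᵀX|, |θ̄_nᵀX − θ̄*ᵀX|}. -/
open MeasureTheory ProbabilityTheory Real Filter Set
open scoped RealInnerProductSpace ENNReal

noncomputable section

/-- The lower `p`-quantile of a cdf-like function `F`: `inf {u | F u ≥ p}`. -/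
def quantileOf (F : ℝ → ℝ) (p : ℝ) : ℝ := sInf {u : ℝ | p ≤ F u}

/-- CQR nonconformity score `S(x, y; (a, b)) = max{⟪a,x⟫ - y, y - ⟪b,x⟫}`. -/
def cqrScore {d : ℕ} (a b x : EuclideanSpace ℝ (Fin d)) (y : ℝ) : ℝ :=
  max (⟪a, x⟫ - y) (y - ⟪b, x⟫)

/-- The cdf of the CQR score given the model parameters `(a, b)`
(i.e. the cdf of `S | ϑ_n = (a,b)`, using independence of `(X,Y)` from training). -/
def cqrScoreCDF {Ω : Type} [MeasurableSpace Ω] (μ : Measure Ω) {d : ℕ}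
    (X : Ω → EuclideanSpace ℝ (Fin d)) (Y : Ω → ℝ)
    (a b : EuclideanSpace ℝ (Fin d)) (s : ℝ) : ℝ :=
  (μ {ω | cqrScore a b (X ω) (Y ω) ≤ s}).toReal

/-- The conditional cdf of the CQR score given `X = x` and parameters `(a, b)`,
expressed through the conditional cdf `F` of `Y` given `X`. -/
def cqrCondScoreCDF {d : ℕ} (F : EuclideanSpace ℝ (Fin d) → ℝ → ℝ)
    (a b x : EuclideanSpace ℝ (Fin d)) (s : ℝ) : ℝ :=
  max 0 (F x (⟪b, x⟫ + s) - F x (⟪a, x⟫ - s))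

/-- The conditional density of the CQR score given the parameters `(a, b)`,
expressed through the conditional density `f` of `Y` given `X`. -/
def cqrScoreDensity {Ω : Type} [MeasurableSpace Ω] (μ : Measure Ω) {d : ℕ}
    (X : Ω → EuclideanSpace ℝ (Fin d)) (f : EuclideanSpace ℝ (Fin d) → ℝ → ℝ)
    (a b : EuclideanSpace ℝ (Fin d)) (s : ℝ) : ℝ :=
  ∫ ω, (f (X ω) (⟪a, X ω⟫ - s) + f (X ω) (⟪b, X ω⟫ + s)) ∂μ


lemma quantile_aux (g : ℝ → ℝ) (hg : Continuous g)
    (h0 : Tendsto g atBot (nhds 0)) (h1 : Tendsto g atTop (nhds 1))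
    (p : ℝ) (hp : 0 < p) (hp1 : p < 1) :
    p ≤ g (quantileOf g p) ∧ (∀ u, u < quantileOf g p → g u < p) ∧
      g (quantileOf g p) ≤ p := by
  have hne : {u : ℝ | p ≤ g u}.Nonempty := by
    obtain ⟨u, hu⟩ := (h1.eventually (eventually_gt_nhds hp1)).exists
    exact ⟨u, le_of_lt hu⟩
  have hbdd : BddBelow {u : ℝ | p ≤ g u} := by
    obtain ⟨N, hN⟩ := eventually_atBot.mp (h0.eventually (eventually_lt_nhds hp))
    refine ⟨N, fun u hu => ?_⟩
    by_contra h
    exact absurd hu (not_le.mpr (hN u (le_of_not_ge h)))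
  have hclosed : IsClosed {u : ℝ | p ≤ g u} := isClosed_le continuous_const hg
  have hmem : p ≤ g (quantileOf g p) := hclosed.csInf_mem hne hbdd
  have hstrict : ∀ u, u < quantileOf g p → g u < p := by
    intro u hu
    by_contra h
    exact absurd (csInf_le hbdd (not_lt.mp h)) (not_le.mpr hu)
  refine ⟨hmem, hstrict, ?_⟩
  by_contra h
  push_neg at h
  have hev : ∀ᶠ u in nhds (quantileOf g p), p < g u :=
    (hg.continuousAt).eventually (eventually_gt_nhds h)
  obtain ⟨u, hu1, hu2⟩ :=
    ((hev.filter_mono nhdsWithin_le_nhds).and self_mem_nhdsWithin).exists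
      (f := nhdsWithin (quantileOf g p) (Iio (quantileOf g p)))
  exact absurd (hstrict u hu2) (not_lt.mpr (le_of_lt hu1))

/-- **Conditional score quantile bound** (Lemma B.6): if `F_{Y|X=x}` is continuous for
every `x`, then the conditional `(1-α)`-quantile of the CQR score given `X = x` and
the trained parameters `ϑ_n = (a, b)` satisfies
`|q_{1-α}(S | X=x, ϑ_n)| ≤ Δ(x, ϑ_n) = max{|⟪a,x⟫-⟪a*,x⟫|, |⟪b,x⟫-⟪b*,x⟫|}`. -/
theorem cqr_conditional_score_quantile_bound
    {d : ℕ} (Xset : Set (EuclideanSpace ℝ (Fin d)))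
    (F : EuclideanSpace ℝ (Fin d) → ℝ → ℝ)
    (hFcont : ∀ x ∈ Xset, Continuous (F x))
    (hFmono : ∀ x ∈ Xset, Monotone (F x))
    (hF0 : ∀ x ∈ Xset, Tendsto (F x) atBot (nhds 0))
    (hF1 : ∀ x ∈ Xset, Tendsto (F x) atTop (nhds 1))
    (α : ℝ) (hα : α ∈ Ioo (0 : ℝ) 1)
    (alo ahi : EuclideanSpace ℝ (Fin d))
    (hwslo : ∀ x ∈ Xset, quantileOf (F x) (α / 2) = ⟪alo, x⟫)
    (hwshi : ∀ x ∈ Xset, quantileOf (F x) (1 - α / 2) = ⟪ahi, x⟫) :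
    ∀ x ∈ Xset, ∀ a b : EuclideanSpace ℝ (Fin d),
      |quantileOf (cqrCondScoreCDF F a b x) (1 - α)|
        ≤ max |⟪a, x⟫ - ⟪alo, x⟫| |⟪b, x⟫ - ⟪ahi, x⟫| := by
  intro x hx a b
  have hα1 : (0:ℝ) < α := hα.1
  have hα2 : α < 1 := hα.2
  have hA := quantile_aux (F x) (hFcont x hx) (hF0 x hx) (hF1 x hx) (α / 2)
    (by linarith) (by linarith)
  have hH := quantile_aux (F x) (hFcont x hx) (hF0 x hx) (hF1 x hx) (1 - α / 2)
    (by linarith) (by linarith)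
  rw [hwslo x hx] at hA
  rw [hwshi x hx] at hH
  set Δ := max |⟪a, x⟫ - ⟪alo, x⟫| |⟪b, x⟫ - ⟪ahi, x⟫| with hΔdef
  have hΔ1 : ⟪ahi, x⟫ - ⟪b, x⟫ ≤ Δ := by
    calc ⟪ahi, x⟫ - ⟪b, x⟫ ≤ |⟪b, x⟫ - ⟪ahi, x⟫| := by
          rw [abs_sub_comm]; exact le_abs_self _
      _ ≤ Δ := le_max_right _ _
  have hΔ2 : ⟪alo, x⟫ - ⟪a, x⟫ ≤ Δ := by
    calc ⟪alo, x⟫ - ⟪a, x⟫ ≤ |⟪a, x⟫ - ⟪alo, x⟫| := by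
          rw [abs_sub_comm]; exact le_abs_self _
      _ ≤ Δ := le_max_left _ _
  have hΔ3 : ⟪b, x⟫ - ⟪ahi, x⟫ ≤ Δ := le_trans (le_abs_self _) (le_max_right _ _)
  have hΔ4 : ⟪a, x⟫ - ⟪alo, x⟫ ≤ Δ := le_trans (le_abs_self _) (le_max_left _ _)
  have hmemΔ : 1 - α ≤ cqrCondScoreCDF F a b x Δ := by
    unfold cqrCondScoreCDF
    have h1' : 1 - α / 2 ≤ F x (⟪b, x⟫ + Δ) :=
      le_trans hH.1 (hFmono x hx (by linarith))
    have h2' : F x (⟪a, x⟫ - Δ) ≤ α / 2 :=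
      le_trans (hFmono x hx (by linarith)) hA.2.2
    exact le_max_of_le_right (by linarith)
  have hlb : ∀ u ∈ {u : ℝ | 1 - α ≤ cqrCondScoreCDF F a b x u}, -Δ ≤ u := by
    intro u hu
    by_contra h
    push_neg at h
    have hb : F x (⟪b, x⟫ + u) < 1 - α / 2 := hH.2.1 _ (by linarith)
    have ha : α / 2 ≤ F x (⟪a, x⟫ - u) :=
      le_trans hA.1 (hFmono x hx (by linarith))
    have : cqrCondScoreCDF F a b x u < 1 - α := by
      unfold cqrCondScoreCDF
      exact max_lt (by linarith) (by linarith)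
    exact absurd hu (not_le.mpr (by simpa using this))
  have hbdd : BddBelow {u : ℝ | 1 - α ≤ cqrCondScoreCDF F a b x u} := ⟨-Δ, hlb⟩
  have hub : quantileOf (cqrCondScoreCDF F a b x) (1 - α) ≤ Δ := csInf_le hbdd hmemΔ
  have hlo : -Δ ≤ quantileOf (cqrCondScoreCDF F a b x) (1 - α) :=
    le_csInf ⟨Δ, hmemΔ⟩ hlb
  exact abs_le.mpr ⟨hlo, hub⟩
end
end

section
/- Quantile stability under a local density lower bound: let F be a c.d.f. on ℝ with density f, and suppose there is an interval I ⊆ ℝ and c₀ > 0 with f(s) ≥ c₀ for all s ∈ I. For p ∈ (0,1), let q_p := inf{u : F(u) ≥ p} and suppose q_p ∈ I; set r₀ := min{q_p − inf I, sup I − q_p} ≥ 0. Then for any p' with |p' − p| < c₀ r₀, the quantile q_{p'} := inf{u : F(u) ≥ p'} lies in I and |q_{p'} − q_p| ≤ |p' − p| / c₀. -/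
open MeasureTheory ProbabilityTheory Real Filter Set
open scoped RealInnerProductSpace ENNReal

noncomputable section

/-- **Quantile stability under a local density lower bound** (Lemma B.8): let `F` be a
cdf on `ℝ` with density `f`, and suppose `f ≥ c₀ > 0` on an interval `I`. If the
`p`-quantile `q_p` lies in `I` and `r₀ = min{q_p - inf I, sup I - q_p}`, then for any
`p'` with `|p' - p| < c₀ r₀`, the quantile `q_{p'}` lies in `I` and
`|q_{p'} - q_p| ≤ |p' - p| / c₀`. -/
theorem quantile_stability_of_density_lower_bound
    (F f : ℝ → ℝ)
    (hf0 : ∀ y : ℝ, 0 ≤ f y)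
    (hfint : ∀ u : ℝ, IntegrableOn f (Iic u))
    (hFf : ∀ u : ℝ, F u = ∫ y in Iic u, f y)
    (hF0 : Tendsto F atBot (nhds 0)) (hF1 : Tendsto F atTop (nhds 1))
    (I : Set ℝ) (hI : I.OrdConnected)
    (c₀ : ℝ) (hc₀ : 0 < c₀) (hfI : ∀ s ∈ I, c₀ ≤ f s)
    (p : ℝ) (hp : p ∈ Ioo (0 : ℝ) 1)
    (hqpI : quantileOf F p ∈ I) :
    ∀ p' : ℝ,
      |p' - p| < c₀ * min (quantileOf F p - sInf I) (sSup I - quantileOf F p) →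
      quantileOf F p' ∈ I ∧ |quantileOf F p' - quantileOf F p| ≤ |p' - p| / c₀ := by
  -- basic facts about F
  have hii : ∀ a b : ℝ, IntervalIntegrable f volume a b := fun a b =>
    ⟨(hfint b).mono_set Ioc_subset_Iic_self, (hfint a).mono_set Ioc_subset_Iic_self⟩
  have hsub : ∀ a b : ℝ, F b - F a = ∫ x in a..b, f x := by
    intro a b
    rw [hFf, hFf]
    exact intervalIntegral.integral_Iic_sub_Iic (hfint a) (hfint b)
  have hFcont : Continuous F := by
    have hFeq : F = fun u => (∫ x in (0:ℝ)..u, f x) + F 0 := by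
      funext u
      have := hsub 0 u
      linarith
    rw [hFeq]
    exact (intervalIntegral.continuous_primitive hii 0).add continuous_const
  have hFmono : Monotone F := by
    intro a b hab
    have h1 := hsub a b
    have h2 : 0 ≤ ∫ x in a..b, f x :=
      intervalIntegral.integral_nonneg hab (fun x _ => hf0 x)
    linarith
  have hgrow : ∀ a b : ℝ, a ∈ I → b ∈ I → a ≤ b → F a + c₀ * (b - a) ≤ F b := by
    intro a b ha hb hab
    have h1 : F b - F a = ∫ x in Set.Ioc a b, f x := by
      rw [hsub a b, intervalIntegral.integral_of_le hab]
    have h2 : c₀ * (volume (Set.Ioc a b)).toReal ≤ ∫ x in Set.Ioc a b, f x :=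
      setIntegral_ge_of_const_le_real measurableSet_Ioc (by simp)
        (fun x hx => hfI x (hI.out ha hb ⟨hx.1.le, hx.2⟩))
        ((hfint b).mono_set Ioc_subset_Iic_self)
    rw [Real.volume_Ioc, ENNReal.toReal_ofReal (by linarith)] at h2
    linarith
  have hFnonneg : ∀ u : ℝ, 0 ≤ F u := by
    intro u
    rw [hFf]
    exact setIntegral_nonneg measurableSet_Iic (fun x _ => hf0 x)
  have hFle1 : ∀ u : ℝ, F u ≤ 1 := fun u => hFmono.ge_of_tendsto hF1 u
  -- quantile spec for any q ∈ (0,1)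
  have hquant : ∀ q : ℝ, q ∈ Ioo (0:ℝ) 1 →
      ({u : ℝ | q ≤ F u}).Nonempty ∧ BddBelow {u : ℝ | q ≤ F u} ∧ F (quantileOf F q) = q := by
    intro q hq
    have hne : ({u : ℝ | q ≤ F u}).Nonempty := by
      obtain ⟨u, hu⟩ := (hF1.eventually (eventually_gt_nhds hq.2)).exists
      exact ⟨u, hu.le⟩
    have hbdd : BddBelow {u : ℝ | q ≤ F u} := by
      obtain ⟨M, hM⟩ := eventually_atBot.mp (hF0.eventually (eventually_lt_nhds hq.1))
      refine ⟨M, fun u hu => ?_⟩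
      by_contra h
      push_neg at h
      exact absurd hu (not_le.2 (hM u h.le))
    have hclosed : IsClosed {u : ℝ | q ≤ F u} := isClosed_le continuous_const hFcont
    have hmem : quantileOf F q ∈ {u : ℝ | q ≤ F u} := hclosed.csInf_mem hne hbdd
    have hle : F (quantileOf F q) ≤ q := by
      have hev : ∀ᶠ u in nhdsWithin (quantileOf F q) (Iio (quantileOf F q)), F u ≤ q := by
        filter_upwards [self_mem_nhdsWithin] with u hu
        by_contra h
        push_neg at h
        exact absurd (csInf_le hbdd h.le) (not_le.2 hu)
      exact le_of_tendsto ((hFcont.tendsto _).mono_left nhdsWithin_le_nhds) hev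
    exact ⟨hne, hbdd, le_antisymm hle hmem⟩
  intro p' hp'
  set q : ℝ := quantileOf F p with hq
  set r₀ : ℝ := min (q - sInf I) (sSup I - q) with hr₀
  have habs0 : (0:ℝ) ≤ |p' - p| := abs_nonneg _
  have hr0pos : 0 < r₀ := by nlinarith
  -- membership lemma
  have memI : ∀ t : ℝ, 0 ≤ t → t < r₀ → q - t ∈ I ∧ q + t ∈ I := by
    intro t ht htr
    have h1 : r₀ ≤ q - sInf I := min_le_left _ _
    have h2 : r₀ ≤ sSup I - q := min_le_right _ _
    constructor
    · obtain ⟨a, ha, ha'⟩ : ∃ a ∈ I, a < q - t := by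
        by_cases hb : BddBelow I
        · exact (csInf_lt_iff hb ⟨q, hqpI⟩).mp (by linarith)
        · obtain ⟨a, ha, ha'⟩ := (not_bddBelow_iff.mp hb) (q - t)
          exact ⟨a, ha, ha'⟩
      exact hI.out ha hqpI ⟨ha'.le, by linarith⟩
    · obtain ⟨b, hb, hb'⟩ : ∃ b ∈ I, q + t < b := by
        by_cases hbb : BddAbove I
        · exact (lt_csSup_iff hbb ⟨q, hqpI⟩).mp (by linarith)
        · obtain ⟨b, hb, hb'⟩ := (not_bddAbove_iff.mp hbb) (q + t)
          exact ⟨b, hb, hb'⟩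
      exact hI.out hqpI hb ⟨by linarith, hb'.le⟩
  have hFq : F q = p := (hquant p hp).2.2
  set δ : ℝ := |p' - p| / c₀ with hδ
  have hδ0 : 0 ≤ δ := div_nonneg habs0 hc₀.le
  have hδr : δ < r₀ := by
    rw [hδ, div_lt_iff₀ hc₀]
    linarith
  have hcδ : c₀ * δ = |p' - p| := by
    rw [hδ]; field_simp
  set t₁ : ℝ := (δ + r₀) / 2 with ht₁
  have ht₁0 : 0 ≤ t₁ := by positivity
  have ht₁δ : δ < t₁ := by rw [ht₁]; linarith
  have ht₁r : t₁ < r₀ := by rw [ht₁]; linarith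
  have hmemt₁ := memI t₁ ht₁0 ht₁r
  -- p' ∈ (0, 1)
  have hgl := hgrow (q - t₁) q hmemt₁.1 hqpI (by linarith)
  have hgu := hgrow q (q + t₁) hqpI hmemt₁.2 (by linarith)
  have hnn := hFnonneg (q - t₁)
  have h1u := hFle1 (q + t₁)
  have hna : -(|p' - p|) ≤ p' - p := neg_abs_le _
  have hpa : p' - p ≤ |p' - p| := le_abs_self _
  have hp'pos : 0 < p' := by nlinarith
  have hp'lt1 : p' < 1 := by nlinarith
  obtain ⟨hne', hbdd', hFq'⟩ := hquant p' ⟨hp'pos, hp'lt1⟩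
  have hmemδ := memI δ hδ0 hδr
  -- upper bound
  have hub : quantileOf F p' ≤ q + δ := by
    apply csInf_le hbdd'
    have := hgrow q (q + δ) hqpI hmemδ.2 (by linarith)
    show p' ≤ F (q + δ)
    nlinarith
  -- lower bound
  have hlb : q - δ ≤ quantileOf F p' := by
    apply le_csInf hne'
    intro u hu
    by_contra h
    push_neg at h
    set t₂ : ℝ := min t₁ ((δ + (q - u)) / 2) with ht₂
    have ht₂δ : δ < t₂ := lt_min ht₁δ (by linarith)
    have ht₂r : t₂ < r₀ := lt_of_le_of_lt (min_le_left _ _) ht₁r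
    have ht₂u : t₂ < q - u := lt_of_le_of_lt (min_le_right _ _) (by linarith)
    have hmemt₂ := memI t₂ (by linarith) ht₂r
    have hg := hgrow (q - t₂) q hmemt₂.1 hqpI (by linarith)
    have hmon : F u ≤ F (q - t₂) := hFmono (by linarith)
    have hu' : p' ≤ F u := hu
    nlinarith
  refine ⟨hI.out hmemδ.1 hmemδ.2 ⟨by linarith, by linarith⟩, ?_⟩
  rw [abs_le]
  constructor <;> linarith
end
end
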